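/- Let B̃, B, P be invertible 2×2 complex matrices with B, B̃ symmetric, and let F be a 2×2 complex matrix such that PᵀBP = B̃ + F and ‖F‖ ≤ |det B̃|/(8‖B̃‖+4). Then there exists ρ ∈ ℂ with ρ² = det B̃ / det B such that |det P − ρ| ≤ ‖F‖·(4‖B̃‖+2)/√(|det B̃|·|det B|). -/

import Mathlib

open Matrix

/-- The entrywise maximum norm `‖X‖ = max_{j,k} |x_{jk}|` on complex matrices. -/
noncomputable def maxNorm {n : ℕ} (X : Matrix (Fin n) (Fin n) ℂ) : ℝ :=
  ((Finset.univ.sup fun p : Fin n × Fin n => ‖X p.1 p.2‖₊ : NNReal) : ℝ)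

/-!
Taking determinants in `Pᵀ B P = B' + F` gives `(det P)² det B = det (B' + F)`, so with
`ρ² = det B' / det B` we get `(det P - ρ)(det P + ρ) det B = det (B' + F) - det B'`, which is
`O(‖F‖)`. Choosing the sign of `ρ` so that `det P - ρ` is the smaller factor, the smallness
of `‖F‖` forces `|det P + ρ| ≥ (5/4)|ρ|`, and dividing by it gives the estimate.
-/

lemma norm_entry_le_maxNorm {n : ℕ} (X : Matrix (Fin n) (Fin n) ℂ) (i j : Fin n) :
    ‖X i j‖ ≤ maxNorm X := by
  have := Finset.le_sup (f := fun p : Fin n × Fin n => ‖X p.1 p.2‖₊) (Finset.mem_univ (i, j))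
  exact_mod_cast this

lemma maxNorm_nonneg {n : ℕ} (X : Matrix (Fin n) (Fin n) ℂ) : 0 ≤ maxNorm X :=
  NNReal.coe_nonneg _

lemma norm_mul_entry_le_maxNorm_mul {n : ℕ} (X Y : Matrix (Fin n) (Fin n) ℂ) (i j k l : Fin n) :
    ‖X i j * Y k l‖ ≤ maxNorm X * maxNorm Y := by
  rw [norm_mul]
  exact mul_le_mul (norm_entry_le_maxNorm X i j) (norm_entry_le_maxNorm Y k l) (norm_nonneg _)
    (maxNorm_nonneg X)

lemma norm_det_fin_two_le (A : Matrix (Fin 2) (Fin 2) ℂ) : ‖A.det‖ ≤ 2 * maxNorm A ^ 2 := by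
  rw [det_fin_two]
  calc ‖A 0 0 * A 1 1 - A 0 1 * A 1 0‖ ≤ ‖A 0 0 * A 1 1‖ + ‖A 0 1 * A 1 0‖ := norm_sub_le _ _
    _ ≤ maxNorm A * maxNorm A + maxNorm A * maxNorm A := by
      gcongr <;> exact norm_mul_entry_le_maxNorm_mul A A _ _ _ _
    _ = 2 * maxNorm A ^ 2 := by ring

lemma norm_det_add_sub_det_fin_two_le (A F : Matrix (Fin 2) (Fin 2) ℂ) :
    ‖(A + F).det - A.det‖ ≤ 4 * maxNorm A * maxNorm F + 2 * maxNorm F ^ 2 := by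
  have hexpand : (A + F).det - A.det =
      A 0 0 * F 1 1 + F 0 0 * A 1 1 - A 0 1 * F 1 0 - F 0 1 * A 1 0 + F.det := by
    simp only [det_fin_two, Matrix.add_apply]
    ring
  have h := norm_mul_entry_le_maxNorm_mul A F
  have h' := norm_mul_entry_le_maxNorm_mul F A
  rw [hexpand]
  calc _ ≤ ‖A 0 0 * F 1 1‖ + ‖F 0 0 * A 1 1‖ + ‖A 0 1 * F 1 0‖ + ‖F 0 1 * A 1 0‖ + ‖F.det‖ := by
        refine (norm_add_le _ _).trans ?_
        gcongr
        refine (norm_sub_le _ _).trans ?_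
        gcongr
        refine (norm_sub_le _ _).trans ?_
        gcongr
        exact norm_add_le _ _
    _ ≤ 4 * maxNorm A * maxNorm F + 2 * maxNorm F ^ 2 := by
        linarith [h 0 0 1 1, h' 0 0 1 1, h 0 1 1 0, h' 0 1 1 0, norm_det_fin_two_le F]

lemma exists_sq_eq_and_norm_sub_le_norm_add {K : Type*} [NormedField K] [IsAlgClosed K]
    (z d : K) : ∃ ρ : K, ρ ^ 2 = z ∧ ‖d - ρ‖ ≤ ‖d + ρ‖ := by
  obtain ⟨r, hr⟩ := IsAlgClosed.exists_pow_nat_eq z two_pos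
  rcases le_total ‖d - r‖ ‖d + r‖ with h | h
  · exact ⟨r, hr, h⟩
  · exact ⟨-r, by rw [neg_sq, hr], by rwa [sub_neg_eq_add, ← sub_eq_add_neg]⟩

/-- `d - ρ`, the smaller factor of `d² - ρ²`, is small, so the other factor `d + ρ` is close
to `2ρ`. -/
lemma mul_norm_sub_le_norm_sq_sub_sq {𝕜 : Type*} [RCLike 𝕜] {d ρ : 𝕜} {κ : ℝ} (hκ : 0 ≤ κ)
    (hmin : ‖d - ρ‖ ≤ ‖d + ρ‖) (hsq : ‖d ^ 2 - ρ ^ 2‖ ≤ κ ^ 2 * ‖ρ‖ ^ 2) :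
    (2 - κ) * ‖ρ‖ * ‖d - ρ‖ ≤ ‖d ^ 2 - ρ ^ 2‖ := by
  have hfactor : ‖d ^ 2 - ρ ^ 2‖ = ‖d - ρ‖ * ‖d + ρ‖ := by
    rw [← norm_mul]; ring_nf
  have hsmall : ‖d - ρ‖ ≤ κ * ‖ρ‖ :=
    le_of_sq_le_sq (by nlinarith [norm_nonneg (d - ρ)]) (by positivity)
  have htriangle : 2 * ‖ρ‖ ≤ ‖d + ρ‖ + ‖d - ρ‖ := by
    calc 2 * ‖ρ‖ = ‖(d + ρ) - (d - ρ)‖ := by rw [← RCLike.norm_two (K := 𝕜), ← norm_mul]; ring_nf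
      _ ≤ ‖d + ρ‖ + ‖d - ρ‖ := norm_sub_le _ _
  rw [hfactor]
  nlinarith [norm_nonneg (d - ρ)]

theorem det_estimate_of_perturbed_T_congruence_general
    (B B' P F : Matrix (Fin 2) (Fin 2) ℂ)
    (hB : IsUnit B) (hB' : IsUnit B')
    (heq : Pᵀ * B * P = B' + F)
    (hF : maxNorm F ≤ ‖B'.det‖ / (8 * maxNorm B' + 4)) :
    ∃ ρ : ℂ, ρ ^ 2 = B'.det / B.det ∧
      ‖P.det - ρ‖ ≤ maxNorm F * (4 * maxNorm B' + 2) / Real.sqrt (‖B'.det‖ * ‖B.det‖) := by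
  obtain ⟨ρ, hρ, hmin⟩ := exists_sq_eq_and_norm_sub_le_norm_add (B'.det / B.det) P.det
  refine ⟨ρ, hρ, ?_⟩
  have hBdet : B.det ≠ 0 := (B.isUnit_iff_isUnit_det.mp hB).ne_zero
  have hB'det : 0 < ‖B'.det‖ := norm_pos_iff.mpr (B'.isUnit_iff_isUnit_det.mp hB').ne_zero
  have hsq : (P.det ^ 2 - ρ ^ 2) * B.det = (B' + F).det - B'.det := by
    rw [← heq, det_mul, det_mul, det_transpose, hρ]
    field_simp
  have hρ_norm : ‖ρ‖ ^ 2 * ‖B.det‖ = ‖B'.det‖ := by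
    rw [← norm_pow, ← norm_mul, hρ, div_mul_cancel₀ _ hBdet]
  have hm : 0 < ‖B.det‖ := norm_pos_iff.mpr hBdet
  have hρ_pos : 0 < ‖ρ‖ := 
    (norm_nonneg ρ).lt_of_ne' (ne_zero_pow two_ne_zero (left_ne_zero_of_mul (hρ_norm ▸ hB'det.ne')))
  have hΔ := norm_det_add_sub_det_fin_two_le B' F
  have hF' : maxNorm F * (8 * maxNorm B' + 4) ≤ ‖B'.det‖ := by
    rwa [le_div_iff₀ (by linarith [maxNorm_nonneg B'])] at hF
  have hfb : maxNorm F ≤ maxNorm B' / 4 := by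
    nlinarith [norm_det_fin_two_le B', maxNorm_nonneg B', maxNorm_nonneg F]
  rw [← hsq, norm_mul] at hΔ
  have hsmall : ‖P.det ^ 2 - ρ ^ 2‖ ≤ (3 / 4) ^ 2 * ‖ρ‖ ^ 2 := by
    refine le_of_mul_le_mul_right ?_ hm
    nlinarith [norm_det_fin_two_le B', maxNorm_nonneg B', maxNorm_nonneg F]
  have hkey := mul_norm_sub_le_norm_sq_sub_sq (by norm_num) hmin hsmall
  rw [← hρ_norm, show ‖ρ‖ ^ 2 * ‖B.det‖ * ‖B.det‖ = (‖ρ‖ * ‖B.det‖) ^ 2 by ring,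
    Real.sqrt_sq (by positivity), le_div_iff₀ (mul_pos hρ_pos hm)]
  nlinarith [norm_nonneg (P.det - ρ), maxNorm_nonneg B', maxNorm_nonneg F]

/-- Let `B̃, B, P` be invertible `2×2` complex matrices with `B, B̃`
symmetric, and `PᵀBP = B̃ + F` with `‖F‖ ≤ |det B̃|/(8‖B̃‖+4)`. Then there is `ρ ∈ ℂ` with
`ρ² = det B̃ / det B` and `|det P − ρ| ≤ ‖F‖·(4‖B̃‖+2)/√(|det B̃|·|det B|)`. -/
theorem det_estimate_of_perturbed_T_congruence
    (B B' P F : Matrix (Fin 2) (Fin 2) ℂ)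
    (hB : IsUnit B) (hB' : IsUnit B') (hP : IsUnit P)
    (hBs : B.IsSymm) (hB's : B'.IsSymm)
    (heq : Pᵀ * B * P = B' + F)
    (hF : maxNorm F ≤ ‖B'.det‖ / (8 * maxNorm B' + 4)) :
    ∃ ρ : ℂ, ρ ^ 2 = B'.det / B.det ∧
      ‖P.det - ρ‖ ≤ maxNorm F * (4 * maxNorm B' + 2) / Real.sqrt (‖B'.det‖ * ‖B.det‖) :=
  det_estimate_of_perturbed_T_congruence_general B B' P F hB hB' heq hF
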